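/- Let E₆^E = {(x,y,z) ∈ E³ : x ≡ y ≡ z mod θ} with the standard Hermitian form. Then θ(E₆^E)' = {(x,y,z) ∈ E³ : x + y + z ≡ 0 mod θ}, and θ(E₆^E)'/E₆^E ≅ 𝔽₃. -/

import Mathlib

noncomputable section

def ω : ℂ := -1/2 + (Real.sqrt 3 / 2) * Complex.I
def θ : ℂ := ω - (starRingEnd ℂ) ω
def Eis : Subring ℂ := Subring.closure {ω}

/-- The standard Hermitian form on `ℂ³`. -/
def herm3 (x y : Fin 3 → ℂ) : ℂ := ∑ i, x i * (starRingEnd ℂ) (y i)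

/-- `E₆^E = {(x,y,z) ∈ Eis³ : x ≡ y ≡ z mod θ}`. -/
def E6 : Set (Fin 3 → ℂ) :=
  {x | (∀ i, x i ∈ Eis) ∧ (∃ e ∈ Eis, x 0 - x 1 = θ * e) ∧ ∃ e ∈ Eis, x 1 - x 2 = θ * e}

/-- The dual lattice of `E₆^E`. -/
def E6dual : Set (Fin 3 → ℂ) := {v | ∀ x ∈ E6, herm3 x v ∈ Eis}

/-- `θ·(E₆^E)'`. -/
def thetaE6dual : Set (Fin 3 → ℂ) := {z | ∃ v ∈ E6dual, z = θ • v}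

/-! With `θ = 2ω + 1` we have `θ² = -3` and `conj θ = -θ`. Since `x = x₂ (1,1,1) + (a + b) θ e₀ + b θ e₁`
whenever `x₀ - x₁ = θ a` and `x₁ - x₂ = θ b`, the lattice `E6` is spanned over `Eis` by `(1,1,1)` and
the `θ eᵢ`; so `v ∈ E6'` iff every `θ conj vᵢ` and `∑ conj vᵢ` lie in `Eis`, which after scaling by `θ`
is the description of `θ E6'`. Reduction modulo `θ` maps `Eis` onto `𝔽₃`, and `v ↦ (v₀ - v₁) mod θ`
is additive on `θ E6'`, vanishes exactly on `E6` (as `θ ∣ 3`), and takes the value `c` at `(c, 0, -c)`. -/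

open ComplexConjugate

lemma omega_re : ω.re = -1 / 2 := by simp [ω]

lemma omega_im : ω.im = √3 / 2 := by simp [ω]

lemma conj_omega : conj ω = -1 - ω := by
  apply Complex.ext <;> simp [omega_re, omega_im]
  norm_num

lemma omega_sq : ω ^ 2 = -1 - ω := by
  have h3 : √3 ^ 2 = 3 := Real.sq_sqrt (by norm_num)
  apply Complex.ext <;>
    simp [pow_two, Complex.mul_re, Complex.mul_im, omega_re, omega_im] <;> nlinarith [h3]

lemma theta_eq : θ = 2 * ω + 1 := by rw [θ, conj_omega]; ring

lemma theta_sq : θ ^ 2 = -3 := by rw [theta_eq]; linear_combination 4 * omega_sq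

lemma conj_theta : conj θ = -θ := by rw [θ, map_sub, Complex.conj_conj]; ring

lemma theta_ne_zero : θ ≠ 0 := fun h => by simpa [h] using theta_sq

lemma mem_Eis_iff {x : ℂ} : x ∈ Eis ↔ ∃ a b : ℤ, x = a + b * ω := by
  constructor
  · intro hx
    induction hx using Subring.closure_induction with
    | mem y hy => rcases hy with rfl; exact ⟨0, 1, by push_cast; ring⟩
    | zero => exact ⟨0, 0, by push_cast; ring⟩
    | one => exact ⟨1, 0, by push_cast; ring⟩
    | add x y _ _ hx hy =>
        obtain ⟨a, b, rfl⟩ := hx; obtain ⟨c, d, rfl⟩ := hy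
        exact ⟨a + c, b + d, by push_cast; ring⟩
    | neg x _ hx =>
        obtain ⟨a, b, rfl⟩ := hx
        exact ⟨-a, -b, by push_cast; ring⟩
    | mul x y _ _ hx hy =>
        obtain ⟨a, b, rfl⟩ := hx; obtain ⟨c, d, rfl⟩ := hy
        exact ⟨a * c - b * d, a * d + b * c - b * d, by
          push_cast; linear_combination (b : ℂ) * d * omega_sq⟩
  · rintro ⟨a, b, rfl⟩
    exact add_mem (intCast_mem _ a) (mul_mem (intCast_mem _ b) (Subring.subset_closure rfl))

lemma theta_mem_Eis : θ ∈ Eis := mem_Eis_iff.mpr ⟨1, 2, by rw [theta_eq]; push_cast; ring⟩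

lemma conj_mem_Eis {x : ℂ} (hx : x ∈ Eis) : conj x ∈ Eis := by
  obtain ⟨a, b, rfl⟩ := mem_Eis_iff.mp hx
  refine mem_Eis_iff.mpr ⟨a - b, -b, ?_⟩
  simp only [map_add, map_mul, map_intCast, conj_omega]
  push_cast
  ring

lemma conj_mem_Eis_iff {x : ℂ} : conj x ∈ Eis ↔ x ∈ Eis :=
  ⟨fun hx => by simpa using conj_mem_Eis hx, conj_mem_Eis⟩

/-- The real functional sending `a + bω` to `a + b`. -/
def omegaSum : ℂ →ₗ[ℝ] ℝ := Complex.reLm + √3 • Complex.imLm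

lemma omegaSum_intCast_add_mul_omega (a b : ℤ) : omegaSum (a + b * ω) = a + b := by
  have h3 : √3 * √3 = 3 := Real.mul_self_sqrt (by norm_num)
  simp only [omegaSum, LinearMap.add_apply, LinearMap.smul_apply, Complex.reLm_coe,
    Complex.imLm_coe, Complex.add_re, Complex.add_im, Complex.mul_re, Complex.mul_im,
    Complex.intCast_re, Complex.intCast_im, omega_re, omega_im, zero_mul, sub_zero, add_zero,
    zero_add, smul_eq_mul]
  linear_combination (b : ℝ) / 2 * h3

lemma theta_mul_intCast_add_mul_omega (c d : ℤ) :
    θ * (c + d * ω) = ((c - 2 * d : ℤ) : ℂ) + ((2 * c - d : ℤ) : ℂ) * ω := by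
  rw [theta_eq]; push_cast; linear_combination 2 * (d : ℂ) * omega_sq

lemma theta_dvd_iff (a b : ℤ) : (∃ e ∈ Eis, (a : ℂ) + b * ω = θ * e) ↔ 3 ∣ a + b := by
  constructor
  · rintro ⟨e, he, hab⟩
    obtain ⟨c, d, rfl⟩ := mem_Eis_iff.mp he
    have h := congrArg omegaSum (hab.trans (theta_mul_intCast_add_mul_omega c d))
    simp only [omegaSum_intCast_add_mul_omega] at h
    exact ⟨c - d, by push_cast at h; exact_mod_cast (by linarith : (a + b : ℝ) = 3 * (c - d))⟩
  · rintro ⟨k, hk⟩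
    refine ⟨(b - k : ℤ) + (b - 2 * k : ℤ) * ω, mem_Eis_iff.mpr ⟨_, _, rfl⟩, ?_⟩
    rw [theta_mul_intCast_add_mul_omega, show a = 3 * k - b by omega]
    push_cast
    ring

/-- Reduction modulo `θ`: as `ω ≡ 1 mod θ` and `θ ∣ 3`, it sends `a + bω` to `a + b mod 3`
(the floor is exact on `Eis`). -/
def residue (x : ℂ) : ZMod 3 := ⌊omegaSum x⌋

lemma residue_intCast_add_mul_omega (a b : ℤ) : residue (a + b * ω) = a + b := by
  rw [residue, omegaSum_intCast_add_mul_omega, ← Int.cast_add, Int.floor_intCast]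
  push_cast
  rfl

lemma residue_add {x y : ℂ} (hx : x ∈ Eis) (hy : y ∈ Eis) :
    residue (x + y) = residue x + residue y := by
  obtain ⟨a, b, rfl⟩ := mem_Eis_iff.mp hx
  obtain ⟨c, d, rfl⟩ := mem_Eis_iff.mp hy
  have h : (a + b * ω) + (c + d * ω) = ((a + c : ℤ) : ℂ) + ((b + d : ℤ) : ℂ) * ω := by
    push_cast; ring
  rw [h, residue_intCast_add_mul_omega, residue_intCast_add_mul_omega,
    residue_intCast_add_mul_omega]
  push_cast
  ring

lemma residue_eq_zero_iff {x : ℂ} (hx : x ∈ Eis) : residue x = 0 ↔ ∃ e ∈ Eis, x = θ * e := by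
  obtain ⟨a, b, rfl⟩ := mem_Eis_iff.mp hx
  rw [residue_intCast_add_mul_omega, ← Int.cast_add, ZMod.intCast_zmod_eq_zero_iff_dvd,
    theta_dvd_iff]
  norm_num

lemma herm3_eq_dotProduct (x y : Fin 3 → ℂ) : herm3 x y = x ⬝ᵥ star y := rfl

lemma herm3_single (i : Fin 3) (c : ℂ) (v : Fin 3 → ℂ) :
    herm3 (Pi.single i c) v = c * conj (v i) := by
  simp [herm3_eq_dotProduct]

lemma herm3_one (v : Fin 3 → ℂ) : herm3 1 v = ∑ i, conj (v i) := by
  simp [herm3]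

lemma single_theta_mem_E6 (i : Fin 3) : Pi.single i θ ∈ E6 := by
  refine ⟨fun j => ?_, ?_, ?_⟩
  · rcases eq_or_ne j i with rfl | h
    · simpa using theta_mem_Eis
    · simp [h, zero_mem]
  · fin_cases i
    exacts [⟨1, one_mem _, by simp⟩, ⟨-1, neg_mem (one_mem _), by simp⟩, ⟨0, zero_mem _, by simp⟩]
  · fin_cases i
    exacts [⟨0, zero_mem _, by simp⟩, ⟨1, one_mem _, by simp⟩, ⟨-1, neg_mem (one_mem _), by simp⟩]

lemma one_mem_E6 : (1 : Fin 3 → ℂ) ∈ E6 :=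
  ⟨fun _ => one_mem _, ⟨0, zero_mem _, by simp⟩, ⟨0, zero_mem _, by simp⟩⟩

lemma eq_smul_one_add_smul_single {x : Fin 3 → ℂ} {a b : ℂ} (ha : x 0 - x 1 = θ * a)
    (hb : x 1 - x 2 = θ * b) :
    x = x 2 • 1 + (a + b) • Pi.single 0 θ + b • Pi.single 1 θ := by
  have h0 : x 0 = x 2 + θ * (a + b) := by linear_combination ha + hb
  have h1 : x 1 = x 2 + θ * b := by linear_combination hb
  ext i
  fin_cases i <;> simp [h0, h1, mul_comm]

lemma mem_E6dual_iff {v : Fin 3 → ℂ} :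
    v ∈ E6dual ↔ (∀ i, θ * conj (v i) ∈ Eis) ∧ ∑ i, conj (v i) ∈ Eis := by
  refine ⟨fun hv => ⟨fun i => ?_, ?_⟩, ?_⟩
  · simpa [herm3_single] using hv _ (single_theta_mem_E6 i)
  · simpa [herm3_one] using hv _ one_mem_E6
  · rintro ⟨hθ, hsum⟩ x ⟨hx, ⟨a, ha, hxa⟩, ⟨b, hb, hxb⟩⟩
    rw [eq_smul_one_add_smul_single hxa hxb]
    simp only [herm3_eq_dotProduct, add_dotProduct, smul_dotProduct, smul_eq_mul]
    simp only [← herm3_eq_dotProduct, herm3_one, herm3_single]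
    exact add_mem (add_mem (mul_mem (hx 2) hsum) (mul_mem (add_mem ha hb) (hθ 0)))
      (mul_mem hb (hθ 1))

lemma mem_thetaE6dual_iff {z : Fin 3 → ℂ} : z ∈ thetaE6dual ↔ θ⁻¹ • z ∈ E6dual := by
  refine ⟨?_, fun hz => ⟨_, hz, by rw [smul_smul, mul_inv_cancel₀ theta_ne_zero, one_smul]⟩⟩
  rintro ⟨v, hv, rfl⟩
  rwa [smul_smul, inv_mul_cancel₀ theta_ne_zero, one_smul]

lemma thetaE6dual_eq :
    thetaE6dual = {x | (∀ i, x i ∈ Eis) ∧ ∃ e ∈ Eis, x 0 + x 1 + x 2 = θ * e} := by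
  ext z
  have hθ : θ * conj θ⁻¹ = -1 := by
    rw [map_inv₀, conj_theta, inv_neg, mul_neg, mul_inv_cancel₀ theta_ne_zero]
  have hcoord (i : Fin 3) : θ * conj ((θ⁻¹ • z) i) = -conj (z i) := by
    rw [Pi.smul_apply, smul_eq_mul, map_mul, ← mul_assoc, hθ, neg_one_mul]
  have hsum : ∑ i, conj ((θ⁻¹ • z) i) ∈ Eis ↔ ∃ e ∈ Eis, z 0 + z 1 + z 2 = θ * e := by
    rw [← map_sum, conj_mem_Eis_iff]
    simp only [Pi.smul_apply, smul_eq_mul, ← Finset.mul_sum, Fin.sum_univ_three]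
    exact ⟨fun h => ⟨_, h, by rw [mul_inv_cancel_left₀ theta_ne_zero]⟩,
      fun ⟨e, he, h⟩ => by rwa [h, inv_mul_cancel_left₀ theta_ne_zero]⟩
  simp only [mem_thetaE6dual_iff, mem_E6dual_iff, hcoord, neg_mem_iff, conj_mem_Eis_iff, hsum,
    Set.mem_ofPred_eq]

lemma residue_sub_add_sub {v w : Fin 3 → ℂ} (hv : ∀ i, v i ∈ Eis) (hw : ∀ i, w i ∈ Eis) :
    residue ((v + w) 0 - (v + w) 1) = residue (v 0 - v 1) + residue (w 0 - w 1) := by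
  rw [Pi.add_apply, Pi.add_apply, add_sub_add_comm]
  exact residue_add (sub_mem (hv 0) (hv 1)) (sub_mem (hw 0) (hw 1))

lemma residue_sub_eq_zero_iff_mem_E6 {v : Fin 3 → ℂ} (hv : ∀ i, v i ∈ Eis)
    (hsum : ∃ e ∈ Eis, v 0 + v 1 + v 2 = θ * e) : residue (v 0 - v 1) = 0 ↔ v ∈ E6 := by
  rw [residue_eq_zero_iff (sub_mem (hv 0) (hv 1))]
  refine ⟨fun h01 => ⟨hv, h01, ?_⟩, fun hv => hv.2.1⟩
  obtain ⟨e, he, hv3⟩ := hsum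
  obtain ⟨e', he', hv01⟩ := h01
  -- `v 1 - v 2 = (v 0 - v 1) - (v 0 + v 1 + v 2) + 3 v 1` and `3 = -θ²`
  refine ⟨e' - θ * v 1 - e, sub_mem (sub_mem he' (mul_mem theta_mem_Eis (hv 1))) he, ?_⟩
  linear_combination hv01 - hv3 + v 1 * theta_sq

/-- `θ(E₆^E)' = {(x,y,z) ∈ Eis³ : x+y+z ≡ 0 mod θ}` and `θ(E₆^E)'/E₆^E ≅ 𝔽₃`. -/
theorem stmt8 :
    thetaE6dual = {x | (∀ i, x i ∈ Eis) ∧ ∃ e ∈ Eis, x 0 + x 1 + x 2 = θ * e} ∧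
    ∃ f : (Fin 3 → ℂ) → ZMod 3,
      (∀ v ∈ thetaE6dual, ∀ w ∈ thetaE6dual, f (v + w) = f v + f w) ∧
      (∀ v ∈ thetaE6dual, (f v = 0 ↔ v ∈ E6)) ∧
      (∀ c : ZMod 3, ∃ v ∈ thetaE6dual, f v = c) := by
  rw [thetaE6dual_eq]
  refine ⟨rfl, fun v => residue (v 0 - v 1), ?_, ?_, fun c => ?_⟩
  · rintro v ⟨hv, -⟩ w ⟨hw, -⟩
    exact residue_sub_add_sub hv hw
  · rintro v ⟨hv, hsum⟩
    exact residue_sub_eq_zero_iff_mem_E6 hv hsum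
  · have hc : (c.val : ℂ) ∈ Eis := natCast_mem _ _
    refine ⟨![c.val, 0, -c.val], ⟨fun i => ?_, 0, zero_mem _, by simp⟩, ?_⟩
    · fin_cases i
      exacts [hc, zero_mem _, neg_mem hc]
    · simpa using residue_intCast_add_mul_omega c.val 0
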